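/- Let G be a d-connected graph with no crossing d-separators, and let X be an inclusion-wise minimal d-fragment of G. Then X ∪ N_G(X) is a (d+1)-block of G, i.e., a maximal vertex set in which every two vertices are either adjacent or joined by at least d+1 internally vertex-disjoint paths in G. -/

import Mathlib

variable {V : Type*}

/-- `u` and `v` lie in the same component of `G − S`. -/
def ReachOutside (G : SimpleGraph V) (S : Set V) (u v : V) : Prop :=
  ∃ (hu : u ∈ Sᶜ) (hv : v ∈ Sᶜ), (G.induce Sᶜ).Reachable ⟨u, hu⟩ ⟨v, hv⟩

/-- `S` is a separator of `G`: `G − S` is disconnected. -/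
def IsSeparator (G : SimpleGraph V) (S : Set V) : Prop :=
  ∃ u v, u ∉ S ∧ v ∉ S ∧ ¬ ReachOutside G S u v

/-- `S` is a `d`-separator of `G`. -/
def IsdSeparator (G : SimpleGraph V) (d : ℕ) (S : Set V) : Prop :=
  S.ncard = d ∧ IsSeparator G S

/-- `S` separates `u` from `v` in `G`. -/
def SeparatesPair (G : SimpleGraph V) (S : Set V) (u v : V) : Prop :=
  u ∉ S ∧ v ∉ S ∧ ¬ ReachOutside G S u v

/-- `S` crosses `T`: `S` contains vertices of at least two components of `G − T`. -/
def Crosses (G : SimpleGraph V) (S T : Set V) : Prop :=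
  ∃ s₁ s₂, s₁ ∈ S ∧ s₂ ∈ S ∧ s₁ ∉ T ∧ s₂ ∉ T ∧ ¬ ReachOutside G T s₁ s₂

def Noncrossing (G : SimpleGraph V) (S T : Set V) : Prop :=
  ¬ Crosses G S T ∧ ¬ Crosses G T S

/-- `G` is `d`-connected. -/
def dConnected [Fintype V] (G : SimpleGraph V) (d : ℕ) : Prop :=
  d + 1 ≤ Fintype.card V ∧ ∀ S : Set V, S.ncard < d → ¬ IsSeparator G S

/-- the neighbours of `X` outside `X`. -/
def nbhd (G : SimpleGraph V) (X : Set V) : Set V :=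
  {v | v ∉ X ∧ ∃ x ∈ X, G.Adj x v}

/-- the complement `V − X − N_G(X)` of a fragment. -/
def fragCompl (G : SimpleGraph V) (X : Set V) : Set V :=
  (X ∪ nbhd G X)ᶜ

/-- `X` is a `d`-fragment of `G`. -/
def IsFragment (G : SimpleGraph V) (d : ℕ) (X : Set V) : Prop :=
  X.Nonempty ∧ (nbhd G X).ncard = d ∧ (fragCompl G X).Nonempty

/-- the fragment `X` is `(u,v)`-separating. -/
def FragSeparates (G : SimpleGraph V) (X : Set V) (u v : V) : Prop :=
  (u ∈ X ∧ v ∈ fragCompl G X) ∨ (v ∈ X ∧ u ∈ fragCompl G X)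

/-- there exist `k` pairwise internally disjoint `u`–`v` paths in `G`. -/
def HasIntDisjPaths (G : SimpleGraph V) (u v : V) (k : ℕ) : Prop :=
  ∃ f : Fin k → G.Path u v, Function.Injective f ∧
    ∀ i j, i ≠ j → ∀ x, x ∈ (f i).1.support → x ∈ (f j).1.support → x = u ∨ x = v

/-- `κ(G,u,v)`: the maximum number of pairwise internally disjoint `u`–`v` paths. -/
noncomputable def localConn (G : SimpleGraph V) (u v : V) : ℕ :=
  sSup {k | HasIntDisjPaths G u v k}

/-- `W` is a `k`-block of `G`: a maximal vertex set in which any two distinct vertices are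
adjacent or joined by at least `k` internally disjoint paths. -/
def IsBlock (G : SimpleGraph V) (k : ℕ) (W : Set V) : Prop :=
  (∀ a ∈ W, ∀ b ∈ W, a ≠ b → G.Adj a b ∨ HasIntDisjPaths G a b k) ∧
  (∀ W' : Set V, W ⊆ W' →
    (∀ a ∈ W', ∀ b ∈ W', a ≠ b → G.Adj a b ∨ HasIntDisjPaths G a b k) → W' = W)

/-!
Let `N = N(X)` and let `a, b ∈ X ∪ N` be distinct and non-adjacent. By Menger's theorem it
suffices to show that no set `S` of at most `d` vertices separates `a` from `b`. Such an `S` is a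
`d`-separator by `d`-connectivity, and since `N` does not cross `S`, the component `C` of `a` or
of `b` in `G - S` misses `N`. Then `C ⊆ X` and `N(C) ⊆ S`, so `C` is a `d`-fragment inside `X`;
by minimality `C = X` and `N = S`, which leaves no room for the other vertex. Maximality is the
easy half of Menger's theorem: a vertex beyond `X ∪ N` is separated from `X` by the `d` vertices
of `N`.

Menger's theorem itself is proved for sets `A`, `B` following Göring, by induction on the edge
set: if deleting an edge `xy` creates an `A`–`B` separator `S` with `|S| < k`, then
`S + y` and `S + x` are separators of size `k`, and `k` disjoint walks from `A` to `S + y` and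
from `S + x` to `B` in `G - xy` glue, through `S` and the edge `yx`, to `k` disjoint
`A`–`B` walks.
-/

section Reachability

variable {G H : SimpleGraph V} {S T U X : Set V} {u v w a b : V}

namespace ReachOutside

lemma refl (hu : u ∉ S) : ReachOutside G S u u := ⟨hu, hu, .rfl⟩

lemma of_adj (hu : u ∉ S) (hv : v ∉ S) (h : G.Adj u v) : ReachOutside G S u v :=
  ⟨hu, hv, (SimpleGraph.induce_adj.2 h).reachable⟩

lemma symm : ReachOutside G S u v → ReachOutside G S v u
  | ⟨hu, hv, h⟩ => ⟨hv, hu, h.symm⟩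

lemma trans : ReachOutside G S u v → ReachOutside G S v w → ReachOutside G S u w
  | ⟨hu, _, h₁⟩, ⟨_, hw, h₂⟩ => ⟨hu, hw, h₁.trans h₂⟩

lemma notMem_left (h : ReachOutside G S u v) : u ∉ S := h.1

lemma notMem_right (h : ReachOutside G S u v) : v ∉ S := h.2.1

lemma anti (hST : S ⊆ T) : ReachOutside G T u v → ReachOutside G S u v
  | ⟨hu, hv, h⟩ => ⟨fun h' => hu (hST h'), fun h' => hv (hST h'),
      h.map (SimpleGraph.induceHomOfLE G (Set.compl_subset_compl.2 hST)).toHom⟩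

lemma mono_of_adj (hGH : ∀ u v, u ∉ S → v ∉ S → G.Adj u v → H.Adj u v) :
    ReachOutside G S u v → ReachOutside H S u v
  | ⟨hu, hv, h⟩ => ⟨hu, hv, h.map
      ({ toFun := id, map_rel' := fun {s t} hst => hGH s.1 t.1 s.2 t.2 hst } :
        G.induce Sᶜ →g H.induce Sᶜ)⟩

end ReachOutside

lemma reachOutside_iff_exists_walk :
    ReachOutside G S u v ↔ ∃ p : G.Walk u v, ∀ t ∈ p.support, t ∉ S := by
  constructor
  · rintro ⟨hu, hv, ⟨p⟩⟩
    let q := p.map (SimpleGraph.Embedding.induce Sᶜ).toHom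
    refine ⟨q, fun t ht => ?_⟩
    obtain ⟨⟨t, ht'⟩, -, rfl⟩ := List.mem_map.1 (SimpleGraph.Walk.support_map _ p ▸ ht)
    exact ht'
  · rintro ⟨p, hp⟩
    exact ⟨hp u p.start_mem_support, hp v p.end_mem_support, (p.induce Sᶜ hp).reachable⟩

/-- A walk avoiding one endpoint of `xy` does not use the edge `xy`. -/
lemma ReachOutside.deleteEdges {x y : V} (hxy : x ∈ S ∨ y ∈ S) (h : ReachOutside G S u v) :
    ReachOutside (G.deleteEdges {s(x, y)}) S u v := by
  refine h.mono_of_adj fun s t hs ht hst => (SimpleGraph.deleteEdges_adj ..).2 ⟨hst, ?_⟩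
  rw [Set.mem_singleton_iff, Sym2.eq_iff]
  rintro (⟨rfl, rfl⟩ | ⟨rfl, rfl⟩) <;> tauto

lemma ReachOutside.union_of_forall_notMem (h : ReachOutside G S u v)
    (hT : ∀ t, ReachOutside G S u t → t ∉ T) : ReachOutside G (S ∪ T) u v := by
  classical
  obtain ⟨p, hp⟩ := reachOutside_iff_exists_walk.1 h
  refine reachOutside_iff_exists_walk.2 ⟨p, fun t ht => ?_⟩
  have hut : ReachOutside G S u t := reachOutside_iff_exists_walk.2
    ⟨p.takeUntil t ht, fun s hs => hp s (p.support_takeUntil_subset_support ht hs)⟩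
  rintro (htS | htT)
  exacts [hp t ht htS, hT t hut htT]

theorem SimpleGraph.Walk.exists_prefix_first_mem (X : Set V) :
    ∀ {u v : V} (p : G.Walk u v), (∃ t ∈ p.support, t ∈ X) →
      ∃ z ∈ X, ∃ q : G.Walk u z, (∀ t ∈ q.support, t ∈ p.support) ∧
        (∀ t ∈ q.support, t ∈ X → t = z) ∧
        ∀ t ∈ q.support, ReachOutside G (X \ {t}) u t
  | u, _, .nil, h => by
    obtain ⟨t, ht, htX⟩ := h
    obtain rfl : t = u := by simpa using ht
    exact ⟨t, htX, .nil, by simp, by simp, by simp [ReachOutside.refl]⟩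
  | u, _, .cons (v := b) hub p, h => by
    by_cases hu : u ∈ X
    · exact ⟨u, hu, .nil, by simp, by simp, by simp [ReachOutside.refl]⟩
    have hp : ∃ t ∈ p.support, t ∈ X := by
      obtain ⟨t, ht, htX⟩ := h
      rcases List.mem_cons.1 ht with rfl | ht
      exacts [absurd htX hu, ⟨t, ht, htX⟩]
    obtain ⟨z, hz, q, hqp, hqX, hqreach⟩ := p.exists_prefix_first_mem X hp
    refine ⟨z, hz, .cons hub q, fun t ht => ?_, fun t ht htX => ?_, fun t ht => ?_⟩ <;>
      rcases List.mem_cons.1 ht with rfl | ht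
    · exact List.mem_cons_self
    · exact List.mem_cons_of_mem _ (hqp t ht)
    · exact absurd htX hu
    · exact hqX t ht htX
    · exact .refl fun h => hu h.1
    · exact (ReachOutside.of_adj (fun h => hu h.1) (hqreach t ht).notMem_left hub).trans
        (hqreach t ht)

/-- The first vertex of `X` on some `u`–`v` walk avoiding `T`. -/
lemma ReachOutside.exists_first_mem (h : ReachOutside G T u v)
    (hX : ¬ ReachOutside G (T ∪ X) u v) : ∃ z ∈ X, ReachOutside G (T ∪ (X \ {z})) u z := by
  obtain ⟨p, hp⟩ := reachOutside_iff_exists_walk.1 h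
  have hmeet : ∃ t ∈ p.support, t ∈ T ∪ X := by
    by_contra! hno
    exact hX (reachOutside_iff_exists_walk.2 ⟨p, hno⟩)
  obtain ⟨z, hzTX, q, hqp, -, hq⟩ := p.exists_prefix_first_mem (T ∪ X) hmeet
  have hzT : z ∉ T := hp z (hqp z q.end_mem_support)
  refine ⟨z, hzTX.resolve_left hzT, (hq z q.end_mem_support).anti ?_⟩
  rintro t (ht | ⟨htX, htz⟩)
  exacts [⟨.inl ht, fun h => hzT (h ▸ ht)⟩, ⟨.inr htX, htz⟩]

lemma SimpleGraph.Walk.exists_adj_reachOutside_insert :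
    ∀ {u v : V} (p : G.Walk u v), (∀ t ∈ p.support, t ∉ U) →
      ∀ a ∈ p.support, a ≠ v → ∃ c, G.Adj a c ∧ ReachOutside G (insert a U) c v
  | _, _, .nil, _, a, ha, hav => absurd (by simpa using ha) hav
  | u, _, .cons (v := b) hub p, hp, a, ha, hav => by
    by_cases hap : a ∈ p.support
    · exact p.exists_adj_reachOutside_insert (fun t ht => hp t (by simp [ht])) a hap hav
    obtain rfl : a = u := by simpa [hap] using ha
    refine ⟨b, hub, reachOutside_iff_exists_walk.2 ⟨p, fun t ht => ?_⟩⟩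
    rintro (rfl | htU)
    exacts [hap ht, hp t (by simp [ht]) htU]

lemma ReachOutside.exists_adj_insert (h : ReachOutside G U a b) (hab : a ≠ b) :
    ∃ c, G.Adj a c ∧ ReachOutside G (insert a U) c b := by
  obtain ⟨p, hp⟩ := reachOutside_iff_exists_walk.1 h
  exact p.exists_adj_reachOutside_insert hp a p.start_mem_support hab

end Reachability

section Menger

variable {G H : SimpleGraph V} {S T A B : Set V} {k : ℕ} {a b x y : V}

def SeparatesSets (G : SimpleGraph V) (S A B : Set V) : Prop :=
  ∀ a ∈ A, ∀ b ∈ B, ¬ ReachOutside G S a b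

def HasDisjointWalks (G : SimpleGraph V) (A B : Set V) (k : ℕ) : Prop :=
  ∃ (a b : Fin k → V) (p : ∀ i, G.Walk (a i) (b i)),
    (∀ i, a i ∈ A) ∧ (∀ i, b i ∈ B) ∧
      Pairwise fun i j => (p i).support.Disjoint (p j).support

lemma SeparatesSets.symm (h : SeparatesSets G S A B) : SeparatesSets G S B A :=
  fun b hb a ha hba => h a ha b hb hba.symm

lemma SeparatesSets.insert_of_deleteEdges (h : SeparatesSets (G.deleteEdges {s(x, y)}) S A B)
    {z : V} (hz : z = x ∨ z = y) : SeparatesSets G (insert z S) A B := by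
  intro a ha b hb hab
  refine h a ha b hb ((hab.deleteEdges ?_).anti (Set.subset_insert z S))
  rcases hz with rfl | rfl <;> simp

lemma HasDisjointWalks.mono (hGH : G ≤ H) (h : HasDisjointWalks G A B k) :
    HasDisjointWalks H A B k := by
  obtain ⟨a, b, p, ha, hb, hp⟩ := h
  exact ⟨a, b, fun i => (p i).mapLe hGH, ha, hb, by
    simpa only [SimpleGraph.Walk.support_mapLe_eq_support] using hp⟩

lemma SimpleGraph.deleteEdges_lt_of_adj (h : G.Adj x y) : G.deleteEdges {s(x, y)} < G := by
  refine (G.deleteEdges_le _).lt_of_ne fun hG => ?_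
  have : (G.deleteEdges {s(x, y)}).Adj x y := by rw [hG]; exact h
  simp at this

lemma exists_eq_of_injective_of_ncard_eq [Finite V] {X : Set V} {f : Fin k → V}
    (hf : Function.Injective f) (hfX : ∀ i, f i ∈ X) (hX : X.ncard = k) :
    ∀ s ∈ X, ∃ i, f i = s := by
  have : Set.range f = X := Set.eq_of_subset_of_ncard_le (Set.range_subset_iff.2 hfX)
    (by rw [hX, Set.ncard_range_of_injective hf, Nat.card_fin])
  exact fun s hs => by rwa [← this] at hs

lemma exists_injective_comp_eq [Finite V] [DecidableEq V] {z w : Fin k → V} (hx : x ∉ S)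
    (hz : ∀ i, z i ∈ insert y S) (hz_inj : Function.Injective z)
    (hw : ∀ j, w j ∈ insert x S) (hw_inj : Function.Injective w) (hk : (insert x S).ncard = k) :
    ∃ σ : Fin k → Fin k, Function.Injective σ ∧
      ∀ i, w (σ i) = if z i = y then x else z i := by
  choose σ hσ using fun i => exists_eq_of_injective_of_ncard_eq hw_inj hw hk
    (if z i = y then x else z i) <| by
      split_ifs with h
      exacts [.inl rfl, .inr ((hz i).resolve_left h)]
  refine ⟨σ, fun i j e => hz_inj ?_, hσ⟩
  have := hσ i
  rw [e, hσ j] at this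
  by_cases hi : z i = y <;> by_cases hj : z j = y <;>
    simp only [hi, hj, if_true, if_false] at this
  · exact hi.trans hj.symm
  · exact absurd (this ▸ (hz j).resolve_left hj) hx
  · exact absurd (this ▸ (hz i).resolve_left hi) hx
  · exact this.symm

lemma hasDisjointWalks_of_forall_not_adj [Finite V] (hG : ∀ u v, ¬ G.Adj u v)
    (h : ∀ S, SeparatesSets G S A B → k ≤ S.ncard) : HasDisjointWalks G A B k := by
  have hsep : SeparatesSets G (A ∩ B) A B := by
    intro a ha b hb hab
    obtain ⟨p, hp⟩ := reachOutside_iff_exists_walk.1 hab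
    cases p with
    | nil => exact hp a (by simp) ⟨ha, hb⟩
    | cons hadj _ => exact hG _ _ hadj
  have := Fintype.ofFinite ↥(A ∩ B)
  obtain ⟨f⟩ : Nonempty (Fin k ↪ ↥(A ∩ B)) := Function.Embedding.nonempty_of_card_le <| by
    rw [Fintype.card_fin, ← Nat.card_eq_fintype_card, Nat.card_coe_set_eq]
    exact h _ hsep
  refine ⟨fun i => f i, fun i => f i, fun i => .nil, fun i => (f i).2.1, fun i => (f i).2.2,
    fun i j hij => ?_⟩
  simpa using fun h => hij (f.injective (Subtype.ext h)).symm

lemma SeparatesSets.reachOutside_deleteEdges_cases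
    (hS : SeparatesSets (G.deleteEdges {s(x, y)}) S A B) (hxy : x ≠ y)
    (ha : a ∈ A) (hb : b ∈ B) (h : ReachOutside G S a b) :
    (ReachOutside (G.deleteEdges {s(x, y)}) S a y ∧
        ReachOutside (G.deleteEdges {s(x, y)}) S x b) ∨
      (ReachOutside (G.deleteEdges {s(x, y)}) S a x ∧
        ReachOutside (G.deleteEdges {s(x, y)}) S y b) := by
  have hcut : ¬ ReachOutside G (S ∪ {x, y}) a b := fun h' =>
    hS.insert_of_deleteEdges (.inl rfl) a ha b hb (h'.anti (by intro; simp; tauto))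
  have toH : ∀ {c z}, z ∈ ({x, y} : Set V) → ReachOutside G (S ∪ ({x, y} \ {z})) c z →
      ReachOutside (G.deleteEdges {s(x, y)}) S c z := by
    rintro c z hz hcz
    refine (hcz.deleteEdges ?_).anti Set.subset_union_left
    rcases hz with rfl | rfl <;> simp [hxy, hxy.symm]
  obtain ⟨z, hz, haz⟩ := h.exists_first_mem hcut
  obtain ⟨z', hz', hbz'⟩ := h.symm.exists_first_mem fun h' => hcut h'.symm
  have hzz' : z ≠ z' := fun e => hS a ha b hb ((toH hz haz).trans (e ▸ toH hz' hbz').symm)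
  rcases hz with rfl | rfl <;> rcases hz' with rfl | rfl
  · exact absurd rfl hzz'
  · exact .inr ⟨toH (by simp) haz, (toH (by simp) hbz').symm⟩
  · exact .inl ⟨toH (by simp) haz, (toH (by simp) hbz').symm⟩
  · exact absurd rfl hzz'

lemma SeparatesSets.of_deleteEdges_insert (hS : SeparatesSets (G.deleteEdges {s(x, y)}) S A B)
    (hxy : x ≠ y) (hb : b ∈ B) (hxb : ReachOutside (G.deleteEdges {s(x, y)}) S x b)
    (hT : SeparatesSets (G.deleteEdges {s(x, y)}) T A (insert y S)) : SeparatesSets G T A B := by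
  intro a ha b' hb' h
  have hcut : ¬ ReachOutside G (T ∪ insert x (insert y S)) a b' := fun h' =>
    hS.insert_of_deleteEdges (.inl rfl) a ha b' hb' (h'.anti (by intro; simp; tauto))
  obtain ⟨z, hz, haz⟩ := h.exists_first_mem hcut
  have hazH : ReachOutside (G.deleteEdges {s(x, y)}) (T ∪ (insert x (insert y S) \ {z})) a z :=
    haz.deleteEdges <| by
      rcases eq_or_ne z x with rfl | hzx
      exacts [by simp [hxy.symm], by simp [hzx.symm]]
  rcases hz with rfl | hz
  · refine hS a ha b hb ((hazH.anti fun s hs => .inr ⟨?_, ?_⟩).trans hxb)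
    exacts [by simp [hs], fun e => hxb.notMem_left (e ▸ hs)]
  · exact hT a ha z hz (hazH.anti Set.subset_union_left)

lemma SimpleGraph.Walk.exists_walk_of_eq_or_adj {u v z z' : V} (p : G.Walk u z) (q : G.Walk z' v)
    (h : z = z' ∨ G.Adj z z') :
    ∃ r : G.Walk u v, ∀ t ∈ r.support, t ∈ p.support ∨ t ∈ q.support := by
  rcases h with rfl | h
  · exact ⟨p.append q, fun t ht => (SimpleGraph.Walk.mem_support_append_iff _ _).1 ht⟩
  · refine ⟨p.append (.cons h q), fun t ht => ?_⟩
    rcases (SimpleGraph.Walk.mem_support_append_iff _ _).1 ht with ht | ht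
    · exact .inl ht
    · rcases List.mem_cons.1 ht with rfl | ht
      exacts [.inl p.end_mem_support, .inr ht]

lemma HasDisjointWalks.glue [Finite V] (hHG : H ≤ G) (hyx : G.Adj y x)
    (hS : SeparatesSets H S A B) (hx : x ∉ S) (hy : y ∉ S) (hk : (insert x S).ncard = k)
    (hP : HasDisjointWalks H A (insert y S) k) (hQ : HasDisjointWalks H (insert x S) B k) :
    HasDisjointWalks G A B k := by
  classical
  obtain ⟨a, _, P₀, ha, hPY, hP₀⟩ := hP
  obtain ⟨_, b, Q₀, hQX, hb, hQ₀⟩ := hQ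
  choose z hz P hPsub hPonly hPreach using fun i =>
    (P₀ i).exists_prefix_first_mem (insert y S) ⟨_, (P₀ i).end_mem_support, hPY i⟩
  choose w hw Q hQsub hQonly hQreach using fun j =>
    (Q₀ j).reverse.exists_prefix_first_mem (insert x S) ⟨_, by simp, hQX j⟩
  have hQsub' : ∀ j t, t ∈ (Q j).support → t ∈ (Q₀ j).support := fun j t ht => by
    simpa using hQsub j t ht
  have hmeet : ∀ i j t, t ∈ (P i).support → t ∈ (Q j).support →
      z i = t ∧ w j = t ∧ t ∈ S := by
    intro i j t hti htj
    have htS : t ∈ S := by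
      by_contra htS
      have hsub : ∀ r, S ⊆ insert r S \ {t} := fun r s hs =>
        ⟨.inr hs, fun e => htS ((Set.mem_singleton_iff.1 e) ▸ hs)⟩
      exact hS _ (ha i) _ (hb j)
        (((hPreach i t hti).anti (hsub y)).trans ((hQreach j t htj).anti (hsub x)).symm)
    exact ⟨(hPonly i t hti (.inr htS)).symm, (hQonly j t htj (.inr htS)).symm, htS⟩
  have hz_inj : Function.Injective z := fun i j e => by
    by_contra hij
    exact hP₀ hij (hPsub i _ (P i).end_mem_support) (e ▸ hPsub j _ (P j).end_mem_support)
  have hw_inj : Function.Injective w := fun i j e => by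
    by_contra hij
    exact hQ₀ hij (hQsub' i _ (Q i).end_mem_support) (e ▸ hQsub' j _ (Q j).end_mem_support)
  -- `Q (σ i)` starts where `P i` ends, or at `x` if `P i` ends at `y`.
  obtain ⟨σ, hσ_inj, hσ⟩ := exists_injective_comp_eq hx hz hz_inj hw hw_inj hk
  have hσ_meet : ∀ i j t, t ∈ (P i).support → t ∈ (Q (σ j)).support → i = j := by
    intro i j t hti htj
    obtain ⟨hzi, hwj, htS⟩ := hmeet i (σ j) t hti htj
    have hzy : z i ≠ y := fun h => hy (h ▸ hzi ▸ htS)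
    refine hσ_inj (hw_inj ?_)
    rw [hσ i, if_neg hzy, hzi, hwj]
  choose W hW using fun i => ((P i).mapLe hHG).exists_walk_of_eq_or_adj
    ((Q (σ i)).reverse.mapLe hHG) (by
      rw [hσ i]; split_ifs with h
      exacts [.inr (h ▸ hyx), .inl rfl])
  simp only [SimpleGraph.Walk.support_mapLe_eq_support, SimpleGraph.Walk.support_reverse,
    List.mem_reverse] at hW
  refine ⟨a, fun i => b (σ i), W, ha, fun i => hb _, fun i i' hii' t hti hti' => ?_⟩
  rcases hW i t hti with h | h <;> rcases hW i' t hti' with h' | h'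
  · exact hP₀ hii' (hPsub i t h) (hPsub i' t h')
  · exact hii' (hσ_meet i i' t h h')
  · exact hii' (hσ_meet i' i t h' h).symm
  · exact hQ₀ (hσ_inj.ne hii') (hQsub' _ t h) (hQsub' _ t h')

lemma hasDisjointWalks_of_separatesSets_deleteEdges [Finite V] (hxy : G.Adj x y)
    (hk : ∀ T, SeparatesSets G T A B → k ≤ T.ncard)
    (ih : ∀ A' B', (∀ T, SeparatesSets (G.deleteEdges {s(x, y)}) T A' B' → k ≤ T.ncard) →
      HasDisjointWalks (G.deleteEdges {s(x, y)}) A' B' k)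
    (hS : SeparatesSets (G.deleteEdges {s(x, y)}) S A B) (hSk : S.ncard < k)
    (ha : a ∈ A) (hay : ReachOutside (G.deleteEdges {s(x, y)}) S a y)
    (hb : b ∈ B) (hxb : ReachOutside (G.deleteEdges {s(x, y)}) S x b) :
    HasDisjointWalks G A B k := by
  have hx := hxb.notMem_left
  have hcard : (insert x S).ncard = k := le_antisymm
    (by rw [Set.ncard_insert_of_notMem hx]; omega) (hk _ (hS.insert_of_deleteEdges (.inl rfl)))
  have hswap : G.deleteEdges {s(y, x)} = G.deleteEdges {s(x, y)} := by rw [Sym2.eq_swap]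
  refine HasDisjointWalks.glue (G.deleteEdges_le _) hxy.symm hS hx hay.notMem_right hcard
    (ih _ _ fun T hT => hk T (hS.of_deleteEdges_insert hxy.ne hb hxb hT))
    (ih _ _ fun T hT => hk T ?_)
  exact (SeparatesSets.of_deleteEdges_insert (hswap ▸ hS.symm) hxy.ne.symm ha
    (hswap ▸ hay.symm) (hswap ▸ hT.symm)).symm

theorem hasDisjointWalks_of_forall_separatesSets [Finite V] (G : SimpleGraph V) (A B : Set V)
    (h : ∀ S, SeparatesSets G S A B → k ≤ S.ncard) : HasDisjointWalks G A B k := by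
  induction G using WellFoundedLT.induction generalizing A B with
  | _ G ih =>
  by_cases hE : ∀ u v, ¬ G.Adj u v
  · exact hasDisjointWalks_of_forall_not_adj hE h
  push Not at hE
  obtain ⟨x, y, hxy⟩ := hE
  by_cases hH : ∀ S, SeparatesSets (G.deleteEdges {s(x, y)}) S A B → k ≤ S.ncard
  · exact (ih _ (G.deleteEdges_lt_of_adj hxy) A B hH).mono (G.deleteEdges_le _)
  push Not at hH
  obtain ⟨S, hS, hSk⟩ := hH
  obtain ⟨a, ha, b, hb, hab⟩ : ∃ a ∈ A, ∃ b ∈ B, ReachOutside G S a b := by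
    by_contra! hsep
    exact (h S hsep).not_gt hSk
  obtain ⟨x, y, hxy, hS, hay, hxb⟩ : ∃ x y, G.Adj x y ∧
      SeparatesSets (G.deleteEdges {s(x, y)}) S A B ∧
      ReachOutside (G.deleteEdges {s(x, y)}) S a y ∧
      ReachOutside (G.deleteEdges {s(x, y)}) S x b := by
    rcases hS.reachOutside_deleteEdges_cases hxy.ne ha hb hab with h | h
    · exact ⟨x, y, hxy, hS, h⟩
    · rw [Sym2.eq_swap] at hS h
      exact ⟨y, x, hxy.symm, hS, h⟩
  exact hasDisjointWalks_of_separatesSets_deleteEdges hxy h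
    (ih _ (G.deleteEdges_lt_of_adj hxy)) hS hSk ha hay hb hxb

lemma SeparatesSets.separatesPair_diff (hT : SeparatesSets G T (G.neighborSet a) (G.neighborSet b))
    (hab : a ≠ b) (hnadj : ¬ G.Adj a b) : SeparatesPair G (T \ {a, b}) a b := by
  refine ⟨by simp, by simp, fun h => ?_⟩
  obtain ⟨c, hac, hcb⟩ := h.exists_adj_insert hab
  obtain ⟨d, hbd, hdc⟩ := hcb.symm.exists_adj_insert fun e => hnadj (e ▸ hac)
  refine hT c hac d hbd (hdc.anti fun t ht => ?_).symm
  by_cases hta : t = a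
  · simp [hta]
  by_cases htb : t = b
  · simp [htb]
  simp [ht, hta, htb]

lemma SimpleGraph.Walk.exists_mem_support_ne (p : G.Walk a b) (hab : a ≠ b)
    (hnadj : ¬ G.Adj a b) : ∃ t ∈ p.support, t ≠ a ∧ t ≠ b := by
  have hp := SimpleGraph.Walk.adj_snd (SimpleGraph.Walk.not_nil_of_ne (p := p) hab)
  exact ⟨p.snd, p.getVert_mem_support 1, hp.ne.symm, fun e => hnadj (e ▸ hp)⟩

theorem hasIntDisjPaths_of_forall_separatesPair [Finite V] (hab : a ≠ b) (hnadj : ¬ G.Adj a b)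
    (h : ∀ S, SeparatesPair G S a b → k ≤ S.ncard) : HasIntDisjPaths G a b k := by
  classical
  obtain ⟨c, d, P, hc, hd, hP⟩ := hasDisjointWalks_of_forall_separatesSets G
    (G.neighborSet a) (G.neighborSet b) fun T hT =>
      (h _ (hT.separatesPair_diff hab hnadj)).trans (Set.ncard_le_ncard Set.sdiff_subset)
  let W i : G.Walk a b :=
    .cons ((G.mem_neighborSet _ _).1 (hc i)) ((P i).concat ((G.mem_neighborSet _ _).1 (hd i)).symm)
  have hW : ∀ i j t, t ∈ (W i).bypass.support → t ∈ (W j).bypass.support →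
      t ≠ a → t ≠ b → i = j := by
    intro i j t hi hj hta htb
    by_contra hij
    have hmem : ∀ i, t ∈ (W i).bypass.support → t ∈ (P i).support := fun i ht => by
      simpa [W, SimpleGraph.Walk.support_concat, hta, htb] using
        (W i).support_bypass_subset_support ht
    exact hP hij (hmem i hi) (hmem j hj)
  refine ⟨fun i => ⟨(W i).bypass, (W i).bypass_isPath⟩, fun i j hij => ?_, ?_⟩
  · obtain ⟨t, ht, hta, htb⟩ := (W i).bypass.exists_mem_support_ne hab hnadj
    have e : (W i).bypass = (W j).bypass := congrArg Subtype.val hij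
    exact hW i j t ht (e ▸ ht) hta htb
  · intro i j hij t hi hj
    by_contra! ht
    exact hij (hW i j t hi hj ht.1 ht.2)

lemma HasIntDisjPaths.le_ncard [Finite V] (hp : HasIntDisjPaths G a b k)
    (hS : SeparatesPair G S a b) : k ≤ S.ncard := by
  obtain ⟨f, -, hf⟩ := hp
  obtain ⟨haS, hbS, hab⟩ := hS
  have hmeet : ∀ i, ∃ t ∈ (f i).1.support, t ∈ S := fun i => by
    by_contra! h
    exact hab (reachOutside_iff_exists_walk.2 ⟨_, h⟩)
  choose t ht htS using hmeet
  have hinj : Function.Injective fun i => (⟨t i, htS i⟩ : S) := fun i j e => by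
    by_contra hij
    have e : t i = t j := congrArg Subtype.val e
    rcases hf i j hij (t i) (ht i) (by rw [e]; exact ht j) with h | h
    exacts [haS (h ▸ htS i), hbS (h ▸ htS i)]
  calc k = Nat.card (Fin k) := (Nat.card_fin k).symm
    _ ≤ Nat.card S := Nat.card_le_card_of_injective _ hinj
    _ = S.ncard := Nat.card_coe_set_eq S

end Menger

section Fragments

variable {G : SimpleGraph V} {d : ℕ} {S X : Set V} {u v : V}

lemma SimpleGraph.Walk.end_mem_of_forall_notMem_nbhd :
    ∀ {u v : V} (p : G.Walk u v), u ∈ X → (∀ t ∈ p.support, t ∉ nbhd G X) → v ∈ X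
  | _, _, .nil, hu, _ => hu
  | u, _, .cons (v := b) hub p, hu, hp => by
    refine p.end_mem_of_forall_notMem_nbhd ?_ fun t ht => hp t (by simp [ht])
    by_contra hb
    exact hp b (by simp) ⟨hb, u, hu, hub⟩

lemma mem_of_reachOutside_nbhd (hu : u ∈ X) (h : ReachOutside G (nbhd G X) u v) : v ∈ X := by
  obtain ⟨p, hp⟩ := reachOutside_iff_exists_walk.1 h
  exact p.end_mem_of_forall_notMem_nbhd hu hp

lemma separatesPair_nbhd (hu : u ∈ X) (hv : v ∈ fragCompl G X) :
    SeparatesPair G (nbhd G X) u v :=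
  ⟨fun h => h.1 hu, fun h => hv (.inr h), fun h => hv (.inl (mem_of_reachOutside_nbhd hu h))⟩

lemma IsFragment.isdSeparator (hX : IsFragment G d X) : IsdSeparator G d (nbhd G X) := by
  obtain ⟨⟨x, hx⟩, hXd, ⟨y, hy⟩⟩ := hX
  exact ⟨hXd, x, y, separatesPair_nbhd hx hy⟩

lemma nbhd_setOf_reachOutside_subset (u : V) :
    nbhd G {z | ReachOutside G S u z} ⊆ S := by
  rintro v ⟨hv, z, hz, hzv⟩
  by_contra hvS
  exact hv (hz.trans (.of_adj hz.notMem_right hvS hzv))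

lemma dConnected.le_ncard [Fintype V] (hG : dConnected G d) (hS : IsSeparator G S) :
    d ≤ S.ncard := by
  by_contra! h
  exact hG.2 S h hS

lemma reachOutside_of_minimal_isFragment [Fintype V] (hG : dConnected G d)
    (hX : Minimal (IsFragment G d) X) (hS : S.ncard ≤ d) {m m' : V}
    (hm : m ∈ X ∪ nbhd G X) (hmS : m ∉ S)
    (hmiss : ∀ z, ReachOutside G S m z → z ∉ nbhd G X)
    (hm' : m' ∈ X ∪ nbhd G X) (hm'S : m' ∉ S) : ReachOutside G S m m' := by
  by_contra hmm'
  set C := {z | ReachOutside G S m z}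
  have hmC : m ∈ C := .refl hmS
  have hmX : m ∈ X := hm.resolve_right (hmiss m hmC)
  have hCX : C ⊆ X := fun z hz =>
    mem_of_reachOutside_nbhd hmX ((hz.union_of_forall_notMem hmiss).anti Set.subset_union_right)
  have hNC : nbhd G C ⊆ S := nbhd_setOf_reachOutside_subset m
  have hm'C : m' ∈ fragCompl G C := by
    rintro (h | h)
    exacts [hmm' h, hm'S (hNC h)]
  have hCd : (nbhd G C).ncard = d := le_antisymm ((Set.ncard_le_ncard hNC).trans hS)
    (hG.le_ncard ⟨m, m', separatesPair_nbhd hmC hm'C⟩)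
  have hCeq : C = X := hX.eq_of_le ⟨⟨m, hmC⟩, hCd, ⟨m', hm'C⟩⟩ hCX
  have hNS : nbhd G X = S :=
    Set.eq_of_subset_of_ncard_le (hCeq ▸ hNC) (hS.trans hX.prop.2.1.ge)
  rcases hm' with h | h
  exacts [hmm' (show m' ∈ C by rw [hCeq]; exact h), hm'S (hNS ▸ h)]

lemma adj_or_hasIntDisjPaths_of_minimal_isFragment [Fintype V] (hG : dConnected G d)
    (hnc : ∀ S T : Set V, IsdSeparator G d S → IsdSeparator G d T → ¬ Crosses G S T)
    (hX : Minimal (IsFragment G d) X) {a b : V} (ha : a ∈ X ∪ nbhd G X)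
    (hb : b ∈ X ∪ nbhd G X) (hab : a ≠ b) : G.Adj a b ∨ HasIntDisjPaths G a b (d + 1) := by
  by_cases hadj : G.Adj a b
  · exact .inl hadj
  refine .inr (hasIntDisjPaths_of_forall_separatesPair hab hadj fun S hS => ?_)
  by_contra! hSd
  replace hSd : S.ncard ≤ d := Nat.lt_succ_iff.1 hSd
  have hSsep : IsdSeparator G d S := ⟨le_antisymm hSd (hG.le_ncard ⟨a, b, hS⟩), a, b, hS⟩
  have hncross := hnc _ _ hX.prop.isdSeparator hSsep
  have hmiss : (∀ z, ReachOutside G S a z → z ∉ nbhd G X) ∨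
      ∀ z, ReachOutside G S b z → z ∉ nbhd G X := by
    by_contra! h
    obtain ⟨⟨z, haz, hz⟩, ⟨z', hbz', hz'⟩⟩ := h
    exact hncross ⟨z, z', hz, hz', haz.notMem_right, hbz'.notMem_right,
      fun h => hS.2.2 (haz.trans (h.trans hbz'.symm))⟩
  rcases hmiss with h | h
  · exact hS.2.2 (reachOutside_of_minimal_isFragment hG hX hSd ha hS.1 h hb hS.2.1)
  · exact hS.2.2 (reachOutside_of_minimal_isFragment hG hX hSd hb hS.2.1 h ha hS.1).symm

lemma IsFragment.eq_of_forall_adj_or_hasIntDisjPaths [Finite V] (hX : IsFragment G d X)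
    {W : Set V} (hsub : X ∪ nbhd G X ⊆ W)
    (hW : ∀ a ∈ W, ∀ b ∈ W, a ≠ b → G.Adj a b ∨ HasIntDisjPaths G a b (d + 1)) :
    W = X ∪ nbhd G X := by
  refine Set.Subset.antisymm (fun v hv => ?_) hsub
  by_contra hvX
  obtain ⟨x, hx⟩ := hX.1
  rcases hW x (hsub (.inl hx)) v hv fun e => hvX (.inl (e ▸ hx)) with hadj | hpaths
  · exact hvX (.inr ⟨fun h => hvX (.inl h), x, hx, hadj⟩)
  · have := hpaths.le_ncard (separatesPair_nbhd hx hvX)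
    rw [hX.2.1] at this
    omega

end Fragments

theorem stmt5 [Fintype V] (G : SimpleGraph V) (d : ℕ) (hG : dConnected G d)
    (hnc : ∀ S T : Set V, IsdSeparator G d S → IsdSeparator G d T → ¬ Crosses G S T)
    (X : Set V) (hX : IsFragment G d X)
    (hmin : ∀ Y : Set V, IsFragment G d Y → Y ⊆ X → Y = X) :
    IsBlock G (d + 1) (X ∪ nbhd G X) := by
  have hXmin : Minimal (IsFragment G d) X := ⟨hX, fun Y hY hYX => (hmin Y hY hYX).ge⟩
  exact ⟨fun a ha b hb hab => adj_or_hasIntDisjPaths_of_minimal_isFragment hG hnc hXmin ha hb hab,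
    fun _ hsub hW => hX.eq_of_forall_adj_or_hasIntDisjPaths hsub hW⟩
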